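/- arXiv:2505.08386 — 4 statements merged into one kernel-verified Lean document; each statement's English description precedes it below -/
import Mathlib

section
/- Let E be a real inner product space, b₁,…,b_r ∈ E linearly independent with Gram–Schmidt vectors b_i^* and coefficients μ_{i,l}. Fix 1 ≤ j ≤ k ≤ r, let π_j be the orthogonal projection onto the orthogonal complement of span(b₁,…,b_{j−1}), and set b̂_i := π_j(b_i) for j ≤ i ≤ k. Then for all indices j ≤ l < i ≤ k, the Gram–Schmidt coefficient of the projected family equals that of the original family: ⟨b̂_i, b̂_l^*⟩/⟨b̂_l^*, b̂_l^*⟩ = μ_{i,l}, where b̂_l^* denotes the l-th Gram–Schmidt vector of (b̂_j,…,b̂_k). -/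
/-!
Let `K = span (b_l : l < j)`. For `u ≥ j`, `span (b_l : l < u) = K ⊔ span (b̂_l : j ≤ l < u)`, the
second summand lies in `Kᗮ`, and `b_u - b̂_u ∈ K`. Intersecting with `Kᗮ` (modular law) shows that
`b_u*` is the component of `b̂_u` orthogonal to `span (b̂_l : j ≤ l < u)`, i.e. `b̂_u* = b_u*`.
The numerators agree as well, since `b_i - b̂_i ∈ K` is orthogonal to `b_l*`.
-/

open scoped InnerProductSpace

/-- The Gram–Schmidt orthogonalization `b*` of a finite family `b : Fin r → E`
(Mathlib's `gramSchmidt`, specialized to the index type `Fin r` over `ℝ`):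
`b*_i = b_i - ∑_{l<i} μ_{i,l} b*_l`. -/
noncomputable def gso {E : Type*} [NormedAddCommGroup E] [InnerProductSpace ℝ E]
    {r : ℕ} (b : Fin r → E) : Fin r → E :=
  @InnerProductSpace.gramSchmidt ℝ E _ _ _ (Fin r) _ _ (inferInstance : WellFoundedLT (Fin r)) b

/-- The Gram–Schmidt coefficient `μ_{i,l} = ⟪b_i, b*_l⟫ / ⟪b*_l, b*_l⟫`. -/
noncomputable def gsCoeff {E : Type*} [NormedAddCommGroup E] [InnerProductSpace ℝ E]
    {r : ℕ} (b : Fin r → E) (i l : Fin r) : ℝ :=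
  ⟪b i, gso b l⟫_ℝ / ⟪gso b l, gso b l⟫_ℝ

/-- `projPerp b j` is the orthogonal projection `π_j` of `E` onto the orthogonal
complement of `span (b_l : l < j)` (so `projPerp b 0` is the identity). -/
noncomputable def projPerp {E : Type*} [NormedAddCommGroup E] [InnerProductSpace ℝ E]
    {r : ℕ} (b : Fin r → E) (j : ℕ) (x : E) : E :=
  haveI : FiniteDimensional ℝ (Submodule.span ℝ (b '' {l : Fin r | (l : ℕ) < j})) :=
    FiniteDimensional.span_of_finite ℝ (Set.toFinite _)
  (Submodule.orthogonalProjectionOnto (Submodule.span ℝ (b '' {l : Fin r | (l : ℕ) < j}))ᗮ x : E)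

open Submodule Set

namespace Submodule

variable {R M ι : Type*} [Ring R] [AddCommGroup M] [Module R M]

theorem sup_span_image_le_of_sub_mem {K : Submodule R M} {f g : ι → M} {s : Set ι}
    (h : ∀ i ∈ s, f i - g i ∈ K) : K ⊔ span R (f '' s) ≤ K ⊔ span R (g '' s) := by
  refine sup_le le_sup_left (span_le.2 ?_)
  rintro _ ⟨i, hi, rfl⟩
  rw [← sub_add_cancel (f i) (g i)]
  exact add_mem (mem_sup_left (h i hi)) (mem_sup_right (subset_span (mem_image_of_mem g hi)))

theorem sup_span_image_eq_of_sub_mem {K : Submodule R M} {f g : ι → M} {s : Set ι}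
    (h : ∀ i ∈ s, f i - g i ∈ K) : K ⊔ span R (f '' s) = K ⊔ span R (g '' s) :=
  le_antisymm (sup_span_image_le_of_sub_mem h)
    (sup_span_image_le_of_sub_mem fun i hi => neg_sub (f i) (g i) ▸ K.neg_mem (h i hi))

variable {𝕜 E : Type*} [RCLike 𝕜] [NormedAddCommGroup E] [InnerProductSpace 𝕜 E]

theorem sup_inf_orthogonal_eq_of_le_orthogonal {K W : Submodule 𝕜 E} (hW : W ≤ Kᗮ) :
    (K ⊔ W) ⊓ Kᗮ = W := by
  rw [sup_comm, sup_inf_assoc_of_le K hW, inf_orthogonal_eq_bot, sup_bot_eq]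

end Submodule

namespace InnerProductSpace

variable (𝕜 : Type*) {E ι κ : Type*} [RCLike 𝕜] [NormedAddCommGroup E] [InnerProductSpace 𝕜 E]
  [LinearOrder ι] [LocallyFiniteOrderBot ι] [WellFoundedLT ι]
  [LinearOrder κ] [LocallyFiniteOrderBot κ] [WellFoundedLT κ]

theorem sub_gramSchmidt_mem_span (f : ι → E) (n : ι) :
    f n - gramSchmidt 𝕜 f n ∈ span 𝕜 (f '' Iio n) := by
  rw [← span_gramSchmidt_Iio, gramSchmidt_def 𝕜 f n, sub_sub_cancel]
  refine sum_mem fun i hi => span_mono ?_ (starProjection_apply_mem _ _)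
  exact singleton_subset_iff.2 (mem_image_of_mem _ (Finset.mem_Iio.1 hi))

theorem gramSchmidt_mem_orthogonal_span (f : ι → E) (n : ι) :
    gramSchmidt 𝕜 f n ∈ (span 𝕜 (f '' Iio n))ᗮ := by
  rw [← span_gramSchmidt_Iio]
  have hle : span 𝕜 (gramSchmidt 𝕜 f '' Iio n) ≤ (𝕜 ∙ gramSchmidt 𝕜 f n)ᗮ := span_le.2 <| by
    rintro _ ⟨i, hi, rfl⟩
    exact mem_orthogonal_singleton_iff_inner_right.2 (gramSchmidt_orthogonal 𝕜 f (ne_of_gt hi))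
  exact orthogonal_le hle (le_orthogonal_orthogonal _ (mem_span_singleton_self _))

theorem gramSchmidt_eq_of_sub_mem_of_mem_orthogonal {f : ι → E} {n : ι} {v : E}
    (hsub : f n - v ∈ span 𝕜 (f '' Iio n)) (horth : v ∈ (span 𝕜 (f '' Iio n))ᗮ) :
    gramSchmidt 𝕜 f n = v := by
  refine sub_eq_zero.1 (disjoint_def.1 (orthogonal_disjoint _) _ ?_
    (sub_mem (gramSchmidt_mem_orthogonal_span 𝕜 f n) horth))
  rw [← sub_sub_sub_cancel_left v (gramSchmidt 𝕜 f n) (f n)]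
  exact sub_mem hsub (sub_gramSchmidt_mem_span 𝕜 f n)

theorem gramSchmidt_eq_of_span_Iio_eq_sup {f : ι → E} {g : κ → E} {K : Submodule 𝕜 E}
    {n : ι} {m : κ} (hspan : span 𝕜 (f '' Iio n) = K ⊔ span 𝕜 (g '' Iio m))
    (hg : ∀ i, g i ∈ Kᗮ) (hfg : f n - g m ∈ K) :
    gramSchmidt 𝕜 g m = gramSchmidt 𝕜 f n := by
  have hK : K ≤ span 𝕜 (f '' Iio n) := hspan ▸ le_sup_left
  have hW : span 𝕜 (g '' Iio m) ≤ span 𝕜 (f '' Iio n) := hspan ▸ le_sup_right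
  have hWK : span 𝕜 (g '' Iio m) ≤ Kᗮ := span_le.2 <| by rintro _ ⟨i, -, rfl⟩; exact hg i
  have horth := gramSchmidt_mem_orthogonal_span 𝕜 f n
  refine gramSchmidt_eq_of_sub_mem_of_mem_orthogonal 𝕜 ?_ (orthogonal_le hW horth)
  rw [← sup_inf_orthogonal_eq_of_le_orthogonal hWK, ← hspan]
  refine ⟨?_, sub_mem (hg m) (orthogonal_le hK horth)⟩
  rw [← sub_sub_sub_cancel_left (gramSchmidt 𝕜 f n) (g m) (f n)]
  exact sub_mem (sub_gramSchmidt_mem_span 𝕜 f n) (hK hfg)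

end InnerProductSpace

theorem Fin.Iio_castLE_natAdd {m r : ℕ} (j : ℕ) (h : j + m ≤ r) (u : Fin m) :
    Iio ((Fin.castLE h ∘ Fin.natAdd j) u) =
      {l : Fin r | (l : ℕ) < j} ∪ (Fin.castLE h ∘ Fin.natAdd j) '' Iio u := by
  ext l
  simp only [mem_Iio, mem_union, mem_ofPred_eq, mem_image, Function.comp_apply, Fin.lt_def,
    Fin.ext_iff, Fin.val_castLE, Fin.val_natAdd]
  constructor
  · intro hl
    by_cases hlj : (l : ℕ) < j
    · exact Or.inl hlj
    · exact Or.inr ⟨⟨l - j, by omega⟩, by simp only; omega, by simp only; omega⟩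
  · rintro (hl | ⟨s, hs, hsl⟩) <;> omega

section projPerp

variable {E : Type*} [NormedAddCommGroup E] [InnerProductSpace ℝ E] {r : ℕ} (b : Fin r → E)
  (j : ℕ) (x : E)

theorem projPerp_mem_orthogonal : projPerp b j x ∈ (span ℝ (b '' {l | (l : ℕ) < j}))ᗮ :=
  SetLike.coe_mem _

theorem sub_projPerp_mem : x - projPerp b j x ∈ span ℝ (b '' {l | (l : ℕ) < j}) := by
  have : FiniteDimensional ℝ (span ℝ (b '' {l : Fin r | (l : ℕ) < j})) :=
    FiniteDimensional.span_of_finite ℝ (toFinite _)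
  have h := sub_starProjection_mem_orthogonal (K := (span ℝ (b '' {l : Fin r | (l : ℕ) < j}))ᗮ) x
  rw [orthogonal_orthogonal] at h
  exact h

end projPerp

/-- For linearly independent `b_0, …, b_{r-1}` and `j ≤ k < r`, let
`b̂_t := π_j(b_{j+t})` for `0 ≤ t ≤ k - j`. Then for all `s < t` in range, the
Gram–Schmidt coefficient of the projected family equals that of the original family:
`⟪b̂_t, b̂*_s⟫ / ⟪b̂*_s, b̂*_s⟫ = μ_{j+t, j+s}`. -/
theorem gramSchmidtCoeff_of_projected_family_eq
    {E : Type*} [NormedAddCommGroup E] [InnerProductSpace ℝ E]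
    {r : ℕ} (b : Fin r → E)
    (j k : ℕ) (hjk : j ≤ k) (hk : k < r)
    (bhat : Fin (k - j + 1) → E)
    (hbhat : ∀ t : Fin (k - j + 1),
      bhat t = projPerp b j (b ⟨j + t, by have := t.isLt; omega⟩)) :
    ∀ t s : Fin (k - j + 1), s < t →
      gsCoeff bhat t s =
        gsCoeff b ⟨j + t, by have := t.isLt; omega⟩ ⟨j + s, by have := s.isLt; omega⟩ := by
  intro t s _
  have hr : j + (k - j + 1) ≤ r := by omega
  set K := span ℝ (b '' {l : Fin r | (l : ℕ) < j})
  set e : Fin (k - j + 1) → Fin r := Fin.castLE hr ∘ Fin.natAdd j with he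
  have hperp (u) : bhat u ∈ Kᗮ := hbhat u ▸ projPerp_mem_orthogonal b j _
  have hsub (u) : b (e u) - bhat u ∈ K := hbhat u ▸ sub_projPerp_mem b j _
  have hspan (u) : span ℝ (b '' Iio (e u)) = K ⊔ span ℝ (bhat '' Iio u) := by
    rw [he, Fin.Iio_castLE_natAdd j hr, image_union, span_union, ← image_comp]
    exact sup_span_image_eq_of_sub_mem fun i _ => hsub i
  have hgso (u) : gso bhat u = gso b (e u) :=
    InnerProductSpace.gramSchmidt_eq_of_span_Iio_eq_sup ℝ (hspan u) hperp (hsub u)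
  have hinner : ⟪bhat t, gso b (e s)⟫_ℝ = ⟪b (e t), gso b (e s)⟫_ℝ := by
    have hs : gso b (e s) ∈ Kᗮ := orthogonal_le (hspan s ▸ le_sup_left)
      (InnerProductSpace.gramSchmidt_mem_orthogonal_span ℝ b (e s))
    have h := inner_right_of_mem_orthogonal (hsub t) hs
    rw [inner_sub_left, sub_eq_zero] at h
    exact h.symm
  show gsCoeff bhat t s = gsCoeff b (e t) (e s)
  rw [gsCoeff, gsCoeff, hgso, hinner]
end

section
/- Let E be a real inner product space, b₁,…,b_r ∈ E linearly independent with Gram–Schmidt vectors b_i^*, and let 1/4 < δ < 1. If the basis is δ-LLL reduced, then for all indices 1 ≤ j ≤ i ≤ r, ‖b_j^*‖² ≤ (δ − 1/4)^{−(i−j)} ‖b_i^*‖²; equivalently, ‖b_j^*‖/‖b_i^*‖ ≤ (δ − 1/4)^{−(i−j)/2}. -/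
open scoped InnerProductSpace

/-- A basis `b` is `δ`-LLL reduced if it is size-reduced (`|μ_{i,l}| ≤ 1/2` for `l < i`)
and satisfies the Lovász condition
`δ‖b*_{t}‖² ≤ ‖b*_{t+1} + μ_{t+1,t} b*_{t}‖²` for all `t+1 < r`. -/
def IsLLLReduced {E : Type*} [NormedAddCommGroup E] [InnerProductSpace ℝ E]
    (δ : ℝ) {r : ℕ} (b : Fin r → E) : Prop :=
  (∀ i l : Fin r, l < i → |gsCoeff b i l| ≤ 1 / 2) ∧
  ∀ (t : ℕ) (ht : t + 1 < r),
    δ * ‖gso b ⟨t, Nat.lt_of_succ_lt ht⟩‖ ^ 2 ≤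
      ‖gso b ⟨t + 1, ht⟩ +
        gsCoeff b ⟨t + 1, ht⟩ ⟨t, Nat.lt_of_succ_lt ht⟩ •
          gso b ⟨t, Nat.lt_of_succ_lt ht⟩‖ ^ 2

/-!
Write `c = δ - 1/4`. Since `b*_{t+1}` is orthogonal to `b*_t`, Pythagoras turns the Lovász
condition into `δ‖b*_t‖² ≤ ‖b*_{t+1}‖² + μ_{t+1,t}²‖b*_t‖²`, and size reduction (`μ² ≤ 1/4`)
gives `c‖b*_t‖² ≤ ‖b*_{t+1}‖²`. Chaining these `i - j` steps gives `c^(i-j)‖b*_j‖² ≤ ‖b*_i‖²`,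
and the ratio bound is its square root.
-/

theorem sub_quarter_mul_sq_norm_le_of_inner_eq_zero {E : Type*} [NormedAddCommGroup E]
    [InnerProductSpace ℝ E] {x y : E} (hxy : ⟪x, y⟫_ℝ = 0) {μ δ : ℝ} (hμ : |μ| ≤ 1 / 2)
    (hδ : δ * ‖y‖ ^ 2 ≤ ‖x + μ • y‖ ^ 2) :
    (δ - 1 / 4) * ‖y‖ ^ 2 ≤ ‖x‖ ^ 2 := by
  have hpyth : ‖x + μ • y‖ ^ 2 = ‖x‖ ^ 2 + μ ^ 2 * ‖y‖ ^ 2 := by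
    rw [sq, norm_add_sq_eq_norm_sq_add_norm_sq_real (by rw [real_inner_smul_right, hxy, mul_zero]),
      norm_smul, Real.norm_eq_abs, ← sq_abs μ]
    ring
  have hμ2 : μ ^ 2 ≤ 1 / 4 := by
    rw [← sq_abs]; nlinarith [abs_nonneg μ]
  nlinarith [sq_nonneg ‖y‖]

theorem pow_sub_mul_le_of_mul_le_succ {R : Type*} [Semiring R] [PartialOrder R] [IsOrderedRing R]
    {r : ℕ} {f : Fin r → R} {c : R} (hc : 0 ≤ c)
    (hf : ∀ (t : ℕ) (ht : t + 1 < r), c * f ⟨t, Nat.lt_of_succ_lt ht⟩ ≤ f ⟨t + 1, ht⟩)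
    {j i : Fin r} (hji : j ≤ i) : c ^ ((i : ℕ) - j) * f j ≤ f i := by
  obtain ⟨j, hj⟩ := j
  obtain ⟨i, hi⟩ := i
  simp only [Fin.mk_le_mk] at hji
  induction i, hji using Nat.le_induction with
  | base => simp
  | succ n hjn ih =>
    calc c ^ (n + 1 - j) * f ⟨j, hj⟩ = c * (c ^ (n - j) * f ⟨j, hj⟩) := by
          rw [Nat.sub_add_comm hjn, pow_succ', mul_assoc]
      _ ≤ c * f ⟨n, Nat.lt_of_succ_lt hi⟩ := mul_le_mul_of_nonneg_left (ih _) hc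
      _ ≤ f ⟨n + 1, hi⟩ := hf n hi

theorem IsLLLReduced.mul_sq_norm_gso_le_succ {E : Type*} [NormedAddCommGroup E]
    [InnerProductSpace ℝ E] {r : ℕ} {b : Fin r → E} {δ : ℝ} (hLLL : IsLLLReduced δ b)
    (t : ℕ) (ht : t + 1 < r) :
    (δ - 1 / 4) * ‖gso b ⟨t, Nat.lt_of_succ_lt ht⟩‖ ^ 2 ≤ ‖gso b ⟨t + 1, ht⟩‖ ^ 2 :=
  sub_quarter_mul_sq_norm_le_of_inner_eq_zero
    (InnerProductSpace.gramSchmidt_orthogonal ℝ b (by simp [Fin.ext_iff]))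
    (hLLL.1 _ _ (by simp [Fin.lt_def])) (hLLL.2 t ht)

theorem sq_norm_gramSchmidt_ratio_le_of_isLLLReduced_general
    {E : Type*} [NormedAddCommGroup E] [InnerProductSpace ℝ E]
    {r : ℕ} (b : Fin r → E)
    (δ : ℝ) (hδ : 1 / 4 < δ) (hLLL : IsLLLReduced δ b)
    (j i : Fin r) (hji : j ≤ i) :
    ‖gso b j‖ ^ 2 ≤ ((δ - 1 / 4) ^ ((i : ℕ) - (j : ℕ)))⁻¹ * ‖gso b i‖ ^ 2 ∧
    ‖gso b j‖ / ‖gso b i‖ ≤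
      (δ - 1 / 4) ^ (-((((i : ℕ) : ℝ) - ((j : ℕ) : ℝ)) / 2)) := by
  have hc : 0 < δ - 1 / 4 := by linarith
  set m := (i : ℕ) - j
  have hsq : ‖gso b j‖ ^ 2 ≤ ((δ - 1 / 4) ^ m)⁻¹ * ‖gso b i‖ ^ 2 := by
    rw [← div_eq_inv_mul, le_div_iff₀ (by positivity), mul_comm]
    exact pow_sub_mul_le_of_mul_le_succ (f := fun k => ‖gso b k‖ ^ 2) hc.le
      hLLL.mul_sq_norm_gso_le_succ hji
  have hexp : (((i : ℕ) : ℝ) - ((j : ℕ) : ℝ)) = m := (Nat.cast_sub hji).symm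
  have hrpow : ((δ - 1 / 4) ^ (-((m : ℝ) / 2))) ^ 2 = ((δ - 1 / 4) ^ m)⁻¹ := by
    rw [← Real.rpow_mul_natCast hc.le, Nat.cast_two, neg_mul, div_mul_cancel₀ _ two_ne_zero,
      Real.rpow_neg hc.le, Real.rpow_natCast]
  refine ⟨hsq, div_le_of_le_mul₀ (norm_nonneg _) (by positivity) ?_⟩
  rw [hexp, ← pow_le_pow_iff_left₀ (norm_nonneg _) (by positivity) two_ne_zero, mul_pow, hrpow]
  exact hsq

/-- If `b` is `δ`-LLL reduced with `1/4 < δ < 1`, then for all `j ≤ i`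
one has `‖b*_j‖² ≤ (δ - 1/4)^{-(i-j)} ‖b*_i‖²`; equivalently,
`‖b*_j‖ / ‖b*_i‖ ≤ (δ - 1/4)^{-(i-j)/2}`. -/
theorem sq_norm_gramSchmidt_ratio_le_of_isLLLReduced
    {E : Type*} [NormedAddCommGroup E] [InnerProductSpace ℝ E]
    {r : ℕ} (b : Fin r → E) (hb : LinearIndependent ℝ b)
    (δ : ℝ) (hδ : 1 / 4 < δ) (hδ' : δ < 1) (hLLL : IsLLLReduced δ b)
    (j i : Fin r) (hji : j ≤ i) :
    ‖gso b j‖ ^ 2 ≤ ((δ - 1 / 4) ^ ((i : ℕ) - (j : ℕ)))⁻¹ * ‖gso b i‖ ^ 2 ∧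
    ‖gso b j‖ / ‖gso b i‖ ≤
      (δ - 1 / 4) ^ (-((((i : ℕ) : ℝ) - ((j : ℕ) : ℝ)) / 2)) :=
  sq_norm_gramSchmidt_ratio_le_of_isLLLReduced_general b δ hδ hLLL j i hji
end

section
/- Let E be a real inner product space, b₁,…,b_r ∈ E linearly independent with Gram–Schmidt vectors b_i^*, and let 1/4 < δ < 1. Suppose the basis is δ-LLL reduced. Fix 1 ≤ j ≤ k ≤ r, set β = k − j + 1 and R_i = ‖b_j^*‖/‖b_i^*‖ for j ≤ i ≤ k. Then the product satisfies Π_{i=j}^{k} R_i ≤ (δ − 1/4)^{−β(β−1)/4}. -/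
open scoped InnerProductSpace

/-! Size reduction gives `μ² ≤ 1/4`, so by orthogonality of `b*_t` and `b*_{t+1}` the Lovász
condition becomes `(δ - 1/4) ‖b*_t‖² ≤ ‖b*_{t+1}‖²`. Iterating, `‖b*_j‖ / ‖b*_i‖` is at most
`(δ - 1/4) ^ (-(i - j) / 2)`, and the exponents add up to `-(1/2) ∑_{m < β} m = -β(β-1)/4`. -/

open Finset

lemma sub_one_div_four_mul_norm_sq_le_of_inner_eq_zero {E : Type*} [NormedAddCommGroup E]
    [InnerProductSpace ℝ E] {x y : E} (hxy : ⟪x, y⟫_ℝ = 0) {μ δ : ℝ} (hμ : |μ| ≤ 1 / 2)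
    (h : δ * ‖y‖ ^ 2 ≤ ‖x + μ • y‖ ^ 2) : (δ - 1 / 4) * ‖y‖ ^ 2 ≤ ‖x‖ ^ 2 := by
  have hpyth : ‖x + μ • y‖ ^ 2 = ‖x‖ ^ 2 + μ ^ 2 * ‖y‖ ^ 2 := by
    rw [sq, sq, norm_add_sq_eq_norm_sq_add_norm_sq_real (by rw [inner_smul_right, hxy, mul_zero]),
      norm_smul, Real.norm_eq_abs, ← sq_abs μ]
    ring
  have hμ2 : μ ^ 2 ≤ 1 / 4 := by
    rw [← sq_abs]
    nlinarith [abs_nonneg μ]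
  nlinarith [sq_nonneg ‖y‖]

lemma Fin.sum_Icc_val_sub_val {r : ℕ} {j k : Fin r} (hjk : j ≤ k) :
    ∑ i ∈ Icc j k, ((i : ℕ) - j) = ∑ m ∈ range ((k : ℕ) - j + 1), m := by
  have hval : ∑ i ∈ Icc j k, ((i : ℕ) - j) = ∑ i ∈ Icc (j : ℕ) k, (i - j) := by
    rw [← Fin.map_valEmbedding_Icc, sum_map]
    rfl
  rw [hval, ← Ico_add_one_right_eq_Icc, sum_Ico_eq_sum_range, Nat.sub_add_comm (Fin.le_def.1 hjk)]
  simp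

namespace IsLLLReduced

variable {E : Type*} [NormedAddCommGroup E] [InnerProductSpace ℝ E] {r : ℕ} {b : Fin r → E}
  {δ : ℝ}

theorem sub_mul_norm_gso_sq_le_succ (hLLL : IsLLLReduced δ b) (t : ℕ) (ht : t + 1 < r) :
    (δ - 1 / 4) * ‖gso b ⟨t, by omega⟩‖ ^ 2 ≤ ‖gso b ⟨t + 1, ht⟩‖ ^ 2 :=
  sub_one_div_four_mul_norm_sq_le_of_inner_eq_zero
    (InnerProductSpace.gramSchmidt_orthogonal ℝ b (by simp [Fin.ext_iff]))
    (hLLL.1 _ _ (by simp [Fin.lt_def])) (hLLL.2 t ht)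

theorem pow_mul_norm_gso_sq_le (hLLL : IsLLLReduced δ b) (hδ : 1 / 4 ≤ δ) {i j : Fin r}
    (hji : j ≤ i) : (δ - 1 / 4) ^ ((i : ℕ) - j) * ‖gso b j‖ ^ 2 ≤ ‖gso b i‖ ^ 2 := by
  obtain ⟨i, hi⟩ := i
  obtain ⟨n, rfl⟩ := Nat.exists_eq_add_of_le (Fin.le_def.1 hji)
  induction n with
  | zero => simp
  | succ n ih =>
    calc (δ - 1 / 4) ^ (j + (n + 1) - j : ℕ) * ‖gso b j‖ ^ 2
        = (δ - 1 / 4) * ((δ - 1 / 4) ^ (j + n - j : ℕ) * ‖gso b j‖ ^ 2) := by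
          rw [Nat.add_sub_cancel_left, Nat.add_sub_cancel_left, pow_succ]; ring
      _ ≤ (δ - 1 / 4) * ‖gso b ⟨j + n, by omega⟩‖ ^ 2 :=
          mul_le_mul_of_nonneg_left (ih (by omega) (Fin.le_def.2 (by simp))) (by linarith)
      _ ≤ _ := hLLL.sub_mul_norm_gso_sq_le_succ (j + n) hi

theorem norm_gso_div_le (hLLL : IsLLLReduced δ b) (hδ : 1 / 4 < δ) {i j : Fin r}
    (hji : j ≤ i) :
    ‖gso b j‖ / ‖gso b i‖ ≤ ((δ - 1 / 4) ^ (-(1 / 2 : ℝ))) ^ ((i : ℕ) - j) := by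
  have hε : 0 < δ - 1 / 4 := by linarith
  have hc : ((δ - 1 / 4) ^ (-(1 / 2 : ℝ))) ^ 2 * (δ - 1 / 4) = 1 := by
    rw [← Real.rpow_mul_natCast hε.le]
    norm_num [Real.rpow_neg_one, hε.ne']
  refine div_le_of_le_mul₀ (norm_nonneg _) (by positivity) ?_
  rw [← pow_le_pow_iff_left₀ (norm_nonneg _) (by positivity) two_ne_zero]
  calc ‖gso b j‖ ^ 2
      = (((δ - 1 / 4) ^ (-(1 / 2 : ℝ))) ^ 2) ^ ((i : ℕ) - j) *
          ((δ - 1 / 4) ^ ((i : ℕ) - j) * ‖gso b j‖ ^ 2) := by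
        rw [← mul_assoc, ← mul_pow, hc, one_pow, one_mul]
    _ ≤ (((δ - 1 / 4) ^ (-(1 / 2 : ℝ))) ^ 2) ^ ((i : ℕ) - j) * ‖gso b i‖ ^ 2 :=
        mul_le_mul_of_nonneg_left (hLLL.pow_mul_norm_gso_sq_le hδ.le hji) (by positivity)
    _ = _ := by ring

end IsLLLReduced

theorem prod_gramSchmidt_ratio_le_of_isLLLReduced_general
    {E : Type*} [NormedAddCommGroup E] [InnerProductSpace ℝ E]
    {r : ℕ} (b : Fin r → E)
    (δ : ℝ) (hδ : 1 / 4 < δ) (hLLL : IsLLLReduced δ b)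
    (j k : Fin r) (hjk : j ≤ k) (β : ℕ) (hβ : β = (k : ℕ) - (j : ℕ) + 1) :
    ∏ i ∈ Finset.Icc j k, (‖gso b j‖ / ‖gso b i‖) ≤
      (δ - 1 / 4) ^ (-((β : ℝ) * ((β : ℝ) - 1) / 4)) := by
  have hε : 0 < δ - 1 / 4 := by linarith
  calc ∏ i ∈ Icc j k, ‖gso b j‖ / ‖gso b i‖
      ≤ ∏ i ∈ Icc j k, ((δ - 1 / 4) ^ (-(1 / 2 : ℝ))) ^ ((i : ℕ) - j) :=
        prod_le_prod (fun _ _ ↦ by positivity) fun i hi ↦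
          hLLL.norm_gso_div_le hδ (mem_Icc.1 hi).1
    _ = (δ - 1 / 4) ^ (-(1 / 2 : ℝ) * ↑(∑ i ∈ Icc j k, ((i : ℕ) - j))) := by
        rw [prod_pow_eq_pow_sum, Real.rpow_mul_natCast hε.le]
    _ = _ := by
        obtain ⟨m, rfl⟩ : ∃ m, β = m + 1 := ⟨_, hβ⟩
        have hgauss := sum_range_id_mul_two (m + 1)
        rw [Nat.add_sub_cancel] at hgauss
        rw [Fin.sum_Icc_val_sub_val hjk, ← hβ]
        have hgaussℝ : ((∑ i ∈ range (m + 1), i : ℕ) : ℝ) * 2 = (m + 1) * m := by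
          exact_mod_cast hgauss
        push_cast at hgaussℝ ⊢
        congr 1
        linarith

/-- If `b` is `δ`-LLL reduced with `1/4 < δ < 1`, `j ≤ k`,
`β = k - j + 1`, and `R_i = ‖b*_j‖ / ‖b*_i‖`, then
`∏_{i=j}^{k} R_i ≤ (δ - 1/4)^{-β(β-1)/4}`. -/
theorem prod_gramSchmidt_ratio_le_of_isLLLReduced
    {E : Type*} [NormedAddCommGroup E] [InnerProductSpace ℝ E]
    {r : ℕ} (b : Fin r → E) (hb : LinearIndependent ℝ b)
    (δ : ℝ) (hδ : 1 / 4 < δ) (hδ' : δ < 1) (hLLL : IsLLLReduced δ b)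
    (j k : Fin r) (hjk : j ≤ k) (β : ℕ) (hβ : β = (k : ℕ) - (j : ℕ) + 1) :
    ∏ i ∈ Finset.Icc j k, (‖gso b j‖ / ‖gso b i‖) ≤
      (δ - 1 / 4) ^ (-((β : ℝ) * ((β : ℝ) - 1) / 4)) :=
  prod_gramSchmidt_ratio_le_of_isLLLReduced_general b δ hδ hLLL j k hjk β hβ
end

section
/- Let E be a real inner product space and b₁,…,b_r ∈ E linearly independent with Gram–Schmidt vectors b₁^*,…,b_r^*. Then every nonzero vector v in the lattice generated by b₁,…,b_r (i.e., v = Σ_{i=1}^r x_i b_i with x_i ∈ ℤ, not all zero) satisfies ‖v‖ ≥ min_{1 ≤ i ≤ r} ‖b_i^*‖. -/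
open scoped InnerProductSpace

/-! Let `k` be the last index with `x k ≠ 0` and `v = ∑ x_i b_i`. Since `b*_k` is orthogonal to
`b_i` for `i < k` and `⟪b*_k, b_k⟫ = ‖b*_k‖²`, pairing gives `⟪b*_k, v⟫ = x_k ‖b*_k‖²`. As
`|x_k| ≥ 1`, Cauchy–Schwarz yields `‖b*_k‖ ≤ ‖v‖`. -/

open Finset InnerProductSpace

theorem norm_le_norm_of_inner_eq_mul_norm_sq {𝕜 E : Type*} [RCLike 𝕜] [NormedAddCommGroup E]
    [InnerProductSpace 𝕜 E] {u v : E} {c : 𝕜} (hc : 1 ≤ ‖c‖)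
    (h : ⟪u, v⟫_𝕜 = c * (‖u‖ : 𝕜) ^ 2) : ‖u‖ ≤ ‖v‖ := by
  rcases (norm_nonneg u).eq_or_lt with hu | hu
  · rw [← hu]; exact norm_nonneg v
  refine le_of_mul_le_mul_left ?_ hu
  calc ‖u‖ * ‖u‖ ≤ ‖c‖ * ‖u‖ ^ 2 := by nlinarith
    _ = ‖⟪u, v⟫_𝕜‖ := by simp [h]
    _ ≤ ‖u‖ * ‖v‖ := norm_inner_le_norm u v

section

variable {𝕜 E ι : Type*} [RCLike 𝕜] [NormedAddCommGroup E] [InnerProductSpace 𝕜 E]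
  [LinearOrder ι] [LocallyFiniteOrderBot ι] [WellFoundedLT ι]

theorem inner_gramSchmidt_self (f : ι → E) (n : ι) :
    ⟪gramSchmidt 𝕜 f n, f n⟫_𝕜 = (‖gramSchmidt 𝕜 f n‖ : 𝕜) ^ 2 := by
  conv_lhs => rw [gramSchmidt_def' 𝕜 f n]
  rw [inner_add_right, inner_self_eq_norm_sq_to_K, inner_sum, add_eq_left]
  refine sum_eq_zero fun i hi => ?_
  rw [Submodule.starProjection_singleton, inner_smul_right,
    gramSchmidt_orthogonal 𝕜 f (mem_Iio.1 hi).ne', mul_zero]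

theorem inner_gramSchmidt_sum_smul_of_forall_lt [Fintype ι] (f : ι → E) {x : ι → 𝕜} {k : ι}
    (hx : ∀ i, k < i → x i = 0) :
    ⟪gramSchmidt 𝕜 f k, ∑ i, x i • f i⟫_𝕜 = x k * (‖gramSchmidt 𝕜 f k‖ : 𝕜) ^ 2 := by
  rw [inner_sum, sum_eq_single k, inner_smul_right, inner_gramSchmidt_self]
  · intro i _ hik
    rcases hik.lt_or_gt with hik | hki
    · rw [inner_smul_right, gramSchmidt_inv_triangular 𝕜 f hik, mul_zero]
    · rw [hx i hki, zero_smul, inner_zero_right]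
  · exact fun h => absurd (mem_univ k) h

theorem norm_gramSchmidt_le_norm_sum_smul [Fintype ι] (f : ι → E) {x : ι → 𝕜} {k : ι}
    (hk : 1 ≤ ‖x k‖) (hx : ∀ i, k < i → x i = 0) : ‖gramSchmidt 𝕜 f k‖ ≤ ‖∑ i, x i • f i‖ :=
  norm_le_norm_of_inner_eq_mul_norm_sq hk (inner_gramSchmidt_sum_smul_of_forall_lt f hx)

end

theorem Function.exists_ne_zero_forall_lt_eq_zero {ι M : Type*} [LinearOrder ι] [Finite ι]
    [Zero M] {x : ι → M} (hx : x ≠ 0) : ∃ k, x k ≠ 0 ∧ ∀ i, k < i → x i = 0 := by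
  obtain ⟨k, hk⟩ := Set.toFinite {i | x i ≠ 0} |>.exists_maximal (Function.ne_iff.1 hx)
  exact ⟨k, hk.prop, fun i hki => by_contra fun hi => (hk.not_gt hi hki)⟩

theorem min_gramSchmidt_norm_le_lattice_vector_general
    {E : Type*} [NormedAddCommGroup E] [InnerProductSpace ℝ E]
    {r : ℕ} (hr : 0 < r) (b : Fin r → E)
    (x : Fin r → ℤ) (hx : x ≠ 0) :
    Finset.univ.inf' (Finset.univ_nonempty_iff.mpr ⟨⟨0, hr⟩⟩) (fun i => ‖gso b i‖) ≤
      ‖∑ i, (x i : ℝ) • b i‖ := by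
  obtain ⟨k, hxk, hlast⟩ := Function.exists_ne_zero_forall_lt_eq_zero hx
  calc _ ≤ ‖gso b k‖ := inf'_le _ (mem_univ k)
    _ ≤ ‖∑ i, (x i : ℝ) • b i‖ :=
      norm_gramSchmidt_le_norm_sum_smul b (x := fun i => (x i : ℝ))
        (by rw [Real.norm_eq_abs, ← Int.cast_abs]; exact_mod_cast Int.one_le_abs hxk)
        (fun i hi => by simp [hlast i hi])

/-- Every nonzero vector `v = ∑ x_i b_i` (with `x_i ∈ ℤ`, not all zero)
of the lattice generated by the linearly independent family `b` satisfies
`‖v‖ ≥ min_i ‖b*_i‖`. -/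
theorem min_gramSchmidt_norm_le_lattice_vector
    {E : Type*} [NormedAddCommGroup E] [InnerProductSpace ℝ E]
    {r : ℕ} (hr : 0 < r) (b : Fin r → E) (hb : LinearIndependent ℝ b)
    (x : Fin r → ℤ) (hx : x ≠ 0) :
    Finset.univ.inf' (Finset.univ_nonempty_iff.mpr ⟨⟨0, hr⟩⟩) (fun i => ‖gso b i‖) ≤
      ‖∑ i, (x i : ℝ) • b i‖ :=
  min_gramSchmidt_norm_le_lattice_vector_general hr b x hx
end
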